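/- Decrease of the optimal value function: let x̂ ∈ S, let u⋆ = (u⋆₀,…,u⋆_{N−1}) be ε-admissible for x̂ with J_N(x̂, u⋆) = V_N(x̂), write x⋆(i) := x^ε_{u⋆}(i;x̂), set u⋆_N := μ(x⋆(N)) and x⋆(N+1) := f^ε(x⋆(N), u⋆_N), and let x⁺ := f(x̂, u⋆₀). Assume: the shifted sequence u⁺ := (u⋆₁, …, u⋆_{N−1}, u⋆_N) is ε-admissible for x⁺; all states x⋆(i) (i ∈ [0:N]) and x^ε_{u⁺}(i;x⁺) (i ∈ [0:N−1]) lie in S; and for a constant c̃ > 0 one has ‖x⋆(i)‖ ≤ c̃‖x̂‖ for all i ∈ [1:N] and ‖Φ(x⋆(N+1))‖ ≤ c̃‖x̂‖. Then V_N(x⁺) − V_N(x̂) ≤ −ℓ(x̂, u⋆₀) + C_x‖x̂‖² + C_u‖u⋆₀‖², where C_x := Σ_{i=0}^{N−1} [ ‖Q‖ c̃ L̄^i (2c_x + c_u) + 2‖Q‖ L̄^{2i} c_x² ] + ‖P‖ c̃ L_Φ L̄^N (2c_x + c_u) + 2‖P‖ L_Φ² L̄^{2N} c_x² and C_u := Σ_{i=0}^{N−1}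 [ ‖Q‖ c̃ L̄^i c_u + 2‖Q‖ L̄^{2i} c_u² ] + ‖P‖ c̃ L_Φ L̄^N c_u + 2‖P‖ L_Φ² L̄^{2N} c_u², with ‖Q‖, ‖P‖ operator norms. -/

import Mathlib

/-!
The candidate input `u⁺` is admissible for `x⁺`, so `V_N(x⁺) ≤ J_N(x⁺, u⁺)`, and we split
`J_N(x⁺, u⁺) - J_N(x̂, u⋆)` at the predicted successor `fe x̂ u⋆₀`. Started there, `u⁺` reproduces
the tail of the optimal prediction followed by one step of `μ`, so by the terminal decrease condition
`J_N(fe x̂ u⋆₀, u⁺) ≤ J_N(x̂, u⋆) - ℓ(x̂, u⋆₀)`. The remaining difference compares two surrogate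
trajectories driven by the same inputs whose initial states differ by the model error
`c_x‖x̂‖ + c_u‖u⋆₀‖`; Lipschitz propagation multiplies it by `L̄^i`, and
`xᵀAx - yᵀAy ≤ ‖A‖ ‖x - y‖ (‖x‖ + ‖y‖)` together with the bounds `c̃‖x̂‖` makes every stage (and the
terminal cost, through `L_Φ`) a quadratic form in `(‖x̂‖, ‖u⋆₀‖)`.

A negative `L_Φ` forces the state space to be a point; there the zero input costs nothing, so
optimality forces `u⋆₀ = 0` and both sides vanish.
-/

noncomputable section

abbrev E (n : ℕ) := EuclideanSpace ℝ (Fin n)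

/-- Predicted trajectory of the surrogate model. -/
def traj {n m : ℕ} (fe : E n → E m → E n) (x0 : E n) (u : ℕ → E m) : ℕ → E n
  | 0 => x0
  | k + 1 => fe (traj fe x0 u k) (u k)

/-- Pontryagin set difference `S ⊖ B_r`. -/
def pDiff {n : ℕ} (S : Set (E n)) (r : ℝ) : Set (E n) :=
  {x | ∀ z : E n, ‖z‖ ≤ r → x + z ∈ S}

/-- `c̄(k) = ∑_{i=0}^{k-1} L̄^i`. -/
def cbar (Lbar : ℝ) (k : ℕ) : ℝ := ∑ i ∈ Finset.range k, Lbar ^ i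

/-- Quadratic form `xᵀQx` on Euclidean space. -/
def qf {n : ℕ} (Q : Matrix (Fin n) (Fin n) ℝ) (x : E n) : ℝ :=
  dotProduct (WithLp.equiv 2 (Fin n → ℝ) x) (Q.mulVec (WithLp.equiv 2 (Fin n → ℝ) x))

/-- ε-admissibility of an input sequence `u` for initial state `xh`. -/
def Admissible {n m : ℕ} (fe : E n → E m → E n) (S Xf : Set (E n)) (U : Set (E m))
    (η Lbar : ℝ) (N : ℕ) (xh : E n) (u : ℕ → E m) : Prop :=
  (∀ k < N, u k ∈ U) ∧
  (∀ k, 1 ≤ k → k < N → traj fe xh u k ∈ pDiff S (cbar Lbar k * η)) ∧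
  traj fe xh u N ∈ Xf

/-- MPC cost functional. -/
def JN {n m M : ℕ} (fe : E n → E m → E n) (Q : Matrix (Fin n) (Fin n) ℝ)
    (R : Matrix (Fin m) (Fin m) ℝ) (P : Matrix (Fin M) (Fin M) ℝ) (Φ : E n → E M)
    (N : ℕ) (xh : E n) (u : ℕ → E m) : ℝ :=
  ∑ i ∈ Finset.range N, (qf Q (traj fe xh u i) + qf R (u i)) + qf P (Φ (traj fe xh u N))

/-- Optimal value function. -/
def VN {n m M : ℕ} (fe : E n → E m → E n) (S Xf : Set (E n)) (U : Set (E m))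
    (η Lbar : ℝ) (Q : Matrix (Fin n) (Fin n) ℝ) (R : Matrix (Fin m) (Fin m) ℝ)
    (P : Matrix (Fin M) (Fin M) ℝ) (Φ : E n → E M) (N : ℕ) (xh : E n) : ℝ :=
  sInf (JN fe Q R P Φ N xh '' {u | Admissible fe S Xf U η Lbar N xh u})


/-- Operator norm of a matrix induced by the Euclidean norm. -/
def opN {k : ℕ} (A : Matrix (Fin k) (Fin k) ℝ) : ℝ :=
  ‖Matrix.toEuclideanCLM (𝕜 := ℝ) A‖

open Finset

section QuadraticForm

variable {k : ℕ}

lemma qf_eq_inner (A : Matrix (Fin k) (Fin k) ℝ) (x : E k) :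
    qf A x = inner ℝ x (Matrix.toEuclideanCLM (𝕜 := ℝ) A x) := by
  simp [qf, Matrix.inner_toEuclideanCLM]

lemma qf_zero (A : Matrix (Fin k) (Fin k) ℝ) : qf A 0 = 0 := by
  simp [qf]

lemma qf_nonneg {A : Matrix (Fin k) (Fin k) ℝ} (hA : A.PosSemidef) (x : E k) : 0 ≤ qf A x :=
  hA.dotProduct_mulVec_nonneg _

lemma qf_pos {A : Matrix (Fin k) (Fin k) ℝ} (hA : A.PosDef) {x : E k} (hx : x ≠ 0) :
    0 < qf A x :=
  hA.dotProduct_mulVec_pos (by simpa using hx)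

lemma qf_sub_le (A : Matrix (Fin k) (Fin k) ℝ) (a b : E k) :
    qf A a - qf A b ≤ opN A * ‖a - b‖ * (‖a‖ + ‖b‖) := by
  set T := Matrix.toEuclideanCLM (𝕜 := ℝ) A
  have hsplit : qf A a - qf A b = inner ℝ (a - b) (T a) + inner ℝ b (T (a - b)) := by
    simp only [qf_eq_inner, map_sub, inner_sub_left, inner_sub_right]
    ring
  have ha : inner ℝ (a - b) (T a) ≤ ‖a - b‖ * (‖T‖ * ‖a‖) :=
    (real_inner_le_norm _ _).trans (mul_le_mul_of_nonneg_left (T.le_opNorm a) (norm_nonneg _))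
  have hb : inner ℝ b (T (a - b)) ≤ ‖b‖ * (‖T‖ * ‖a - b‖) :=
    (real_inner_le_norm _ _).trans (mul_le_mul_of_nonneg_left (T.le_opNorm _) (norm_nonneg _))
  calc qf A a - qf A b ≤ ‖a - b‖ * (‖T‖ * ‖a‖) + ‖b‖ * (‖T‖ * ‖a - b‖) := by
        rw [hsplit]; exact add_le_add ha hb
    _ = opN A * ‖a - b‖ * (‖a‖ + ‖b‖) := by rw [opN]; ring

lemma qf_sub_le_of_norm_sub_le (A : Matrix (Fin k) (Fin k) ℝ) {a b : E k}
    {ct l cx cu X V : ℝ} (hct : 0 ≤ ct) (hl : 0 ≤ l) (hcu : 0 ≤ cu)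
    (hb : ‖b‖ ≤ ct * X) (hab : ‖a - b‖ ≤ l * (cx * X + cu * V)) :
    qf A a - qf A b ≤
      (opN A * ct * l * (2 * cx + cu) + 2 * opN A * l ^ 2 * cx ^ 2) * X ^ 2 +
        (opN A * ct * l * cu + 2 * opN A * l ^ 2 * cu ^ 2) * V ^ 2 := by
  set d := l * (cx * X + cu * V)
  have hA : 0 ≤ opN A := norm_nonneg _
  have hsum : ‖a‖ + ‖b‖ ≤ 2 * (ct * X) + d := by
    linarith [norm_le_norm_add_norm_sub' a b]
  have hd : 0 ≤ d := (norm_nonneg _).trans hab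
  have hmain : qf A a - qf A b ≤ opN A * d * (2 * (ct * X) + d) :=
    (qf_sub_le A a b).trans (by gcongr)
  -- AM-GM absorbs the cross term `X * V`
  have hXV : 0 ≤ opN A * ct * l * cu * (X - V) ^ 2 := by positivity
  have hsq : 0 ≤ opN A * l ^ 2 * (cx * X - cu * V) ^ 2 := by positivity
  nlinarith [hmain, hXV, hsq]

end QuadraticForm

/-- The candidate input `u⁺ = (u 1, …, u (N-1), uN)`. -/
def shiftInput {m : ℕ} (u : ℕ → E m) (N : ℕ) (uN : E m) : ℕ → E m :=
  fun k => if k + 1 < N then u (k + 1) else uN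

section Trajectory

variable {n m : ℕ} (fe : E n → E m → E n)

lemma traj_succ_eq_traj_tail (x : E n) (u : ℕ → E m) (k : ℕ) :
    traj fe x u (k + 1) = traj fe (fe x (u 0)) (fun i => u (i + 1)) k := by
  induction k with
  | zero => rfl
  | succ k ih => rw [traj, ih]; rfl

lemma traj_congr_input {x : E n} {u v : ℕ → E m} {K : ℕ} (huv : ∀ i < K, u i = v i) :
    ∀ k ≤ K, traj fe x u k = traj fe x v k := by
  intro k hk
  induction k with
  | zero => rfl
  | succ k ih => rw [traj, traj, ih (by omega), huv k (by omega)]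

lemma traj_shiftInput_of_lt {x : E n} {u : ℕ → E m} {N : ℕ} (uN : E m) {k : ℕ} (hk : k < N) :
    traj fe (fe x (u 0)) (shiftInput u N uN) k = traj fe x u (k + 1) := by
  rw [traj_succ_eq_traj_tail]
  refine traj_congr_input fe (K := N - 1) (fun i hi => ?_) k (by omega)
  simp only [shiftInput, if_pos (show i + 1 < N by omega)]

lemma traj_shiftInput_self {x : E n} {u : ℕ → E m} {N : ℕ} (hN : 1 ≤ N) (uN : E m) :
    traj fe (fe x (u 0)) (shiftInput u N uN) N = fe (traj fe x u N) uN := by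
  obtain ⟨N, rfl⟩ : ∃ N', N = N' + 1 := ⟨N - 1, by omega⟩
  rw [traj, traj_shiftInput_of_lt fe uN (Nat.lt_succ_self N)]
  simp only [shiftInput, lt_irrefl, if_false]

lemma norm_traj_sub_le {S : Set (E n)} {U : Set (E m)} {L : ℝ} (hL : 0 ≤ L)
    (hLip : ∀ u ∈ U, ∀ x ∈ S, ∀ y ∈ S, ‖fe x u - fe y u‖ ≤ L * ‖x - y‖)
    {x y : E n} {v : ℕ → E m} {K : ℕ} (hv : ∀ i < K, v i ∈ U)
    (hx : ∀ i < K, traj fe x v i ∈ S) (hy : ∀ i < K, traj fe y v i ∈ S) :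
    ∀ k ≤ K, ‖traj fe x v k - traj fe y v k‖ ≤ L ^ k * ‖x - y‖ := by
  intro k hk
  induction k with
  | zero => simp [traj]
  | succ k ih =>
    calc ‖traj fe x v (k + 1) - traj fe y v (k + 1)‖
        ≤ L * ‖traj fe x v k - traj fe y v k‖ :=
          hLip _ (hv k hk) _ (hx k hk) _ (hy k hk)
      _ ≤ L * (L ^ k * ‖x - y‖) := by gcongr; exact ih (by omega)
      _ = L ^ (k + 1) * ‖x - y‖ := by ring

end Trajectory

section Cost

variable {n m M : ℕ} (fe : E n → E m → E n) {Q : Matrix (Fin n) (Fin n) ℝ}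
  {R : Matrix (Fin m) (Fin m) ℝ} {P : Matrix (Fin M) (Fin M) ℝ} {Φ : E n → E M}

lemma JN_nonneg (hQ : Q.PosSemidef) (hR : R.PosSemidef) (hP : P.PosSemidef)
    (N : ℕ) (x : E n) (u : ℕ → E m) : 0 ≤ JN fe Q R P Φ N x u :=
  add_nonneg (sum_nonneg fun _ _ => add_nonneg (qf_nonneg hQ _) (qf_nonneg hR _))
    (qf_nonneg hP _)

lemma stage_cost_le_JN (hQ : Q.PosSemidef) (hR : R.PosSemidef) (hP : P.PosSemidef)
    {N : ℕ} (hN : 1 ≤ N) (x : E n) (u : ℕ → E m) :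
    qf Q x + qf R (u 0) ≤ JN fe Q R P Φ N x u :=
  le_add_of_le_of_nonneg
    (single_le_sum (f := fun i => qf Q (traj fe x u i) + qf R (u i))
      (fun _ _ => add_nonneg (qf_nonneg hQ _) (qf_nonneg hR _)) (mem_range.2 hN))
    (qf_nonneg hP _)

lemma VN_le_JN {S Xf : Set (E n)} {U : Set (E m)} {η Lbar : ℝ} {N : ℕ} {x : E n} {u : ℕ → E m}
    (hQ : Q.PosSemidef) (hR : R.PosSemidef) (hP : P.PosSemidef)
    (hu : Admissible fe S Xf U η Lbar N x u) :
    VN fe S Xf U η Lbar Q R P Φ N x ≤ JN fe Q R P Φ N x u :=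
  csInf_le ⟨0, by rintro _ ⟨v, -, rfl⟩; exact JN_nonneg fe hQ hR hP N x v⟩ ⟨u, hu, rfl⟩

lemma JN_sub_JN (N : ℕ) (x y : E n) (v : ℕ → E m) :
    JN fe Q R P Φ N x v - JN fe Q R P Φ N y v =
      ∑ i ∈ range N, (qf Q (traj fe x v i) - qf Q (traj fe y v i)) +
        (qf P (Φ (traj fe x v N)) - qf P (Φ (traj fe y v N))) := by
  simp only [JN, sum_sub_distrib, sum_add_distrib]
  ring

lemma JN_shiftInput_le {μ : E n → E m} {N : ℕ} (hN : 1 ≤ N) (x : E n) (u : ℕ → E m)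
    (hdec : qf P (Φ (fe (traj fe x u N) (μ (traj fe x u N)))) - qf P (Φ (traj fe x u N)) ≤
      -(qf Q (traj fe x u N) + qf R (μ (traj fe x u N)))) :
    JN fe Q R P Φ N (fe x (u 0)) (shiftInput u N (μ (traj fe x u N))) ≤
      JN fe Q R P Φ N x u - (qf Q x + qf R (u 0)) := by
  obtain ⟨N, rfl⟩ : ∃ N', N = N' + 1 := ⟨N - 1, by omega⟩
  have hstage : ∀ i ∈ range N,
      qf Q (traj fe (fe x (u 0)) (shiftInput u (N + 1) (μ (traj fe x u (N + 1)))) i) +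
          qf R (shiftInput u (N + 1) (μ (traj fe x u (N + 1))) i) =
        qf Q (traj fe x u (i + 1)) + qf R (u (i + 1)) := by
    intro i hi
    have hi : i < N := mem_range.1 hi
    rw [traj_shiftInput_of_lt fe _ (by omega)]
    simp only [shiftInput, if_pos (show i + 1 < N + 1 by omega)]
  have hlast : shiftInput u (N + 1) (μ (traj fe x u (N + 1))) N = μ (traj fe x u (N + 1)) := by
    simp only [shiftInput, lt_irrefl, if_false]
  rw [JN, JN, sum_range_succ, sum_congr rfl hstage, sum_range_succ', hlast,
    traj_shiftInput_self fe hN, traj_shiftInput_of_lt fe _ (Nat.lt_succ_self N), traj]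
  linarith

end Cost

lemma JN_sub_JN_le {n m M : ℕ} (fe : E n → E m → E n) (Q : Matrix (Fin n) (Fin n) ℝ)
    (R : Matrix (Fin m) (Fin m) ℝ) (P : Matrix (Fin M) (Fin M) ℝ) {Φ : E n → E M} {LΦ : ℝ}
    (hLΦ : 0 ≤ LΦ) (hΦ : ∀ x y, ‖Φ x - Φ y‖ ≤ LΦ * ‖x - y‖)
    {Lbar ct cx cu X V : ℝ} (hL : 0 ≤ Lbar) (hct : 0 ≤ ct) (hcu : 0 ≤ cu)
    {N : ℕ} {x y : E n} {v : ℕ → E m}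
    (hdev : ∀ i ≤ N, ‖traj fe x v i - traj fe y v i‖ ≤ Lbar ^ i * (cx * X + cu * V))
    (hy : ∀ i < N, ‖traj fe y v i‖ ≤ ct * X) (hΦy : ‖Φ (traj fe y v N)‖ ≤ ct * X) :
    JN fe Q R P Φ N x v - JN fe Q R P Φ N y v ≤
      ((∑ i ∈ range N,
          (opN Q * ct * Lbar ^ i * (2 * cx + cu) + 2 * opN Q * Lbar ^ (2 * i) * cx ^ 2)) +
        opN P * ct * LΦ * Lbar ^ N * (2 * cx + cu) +
        2 * opN P * LΦ ^ 2 * Lbar ^ (2 * N) * cx ^ 2) * X ^ 2 +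
      ((∑ i ∈ range N,
          (opN Q * ct * Lbar ^ i * cu + 2 * opN Q * Lbar ^ (2 * i) * cu ^ 2)) +
        opN P * ct * LΦ * Lbar ^ N * cu +
        2 * opN P * LΦ ^ 2 * Lbar ^ (2 * N) * cu ^ 2) * V ^ 2 := by
  have hstage : ∀ i ∈ range N, qf Q (traj fe x v i) - qf Q (traj fe y v i) ≤
      (opN Q * ct * Lbar ^ i * (2 * cx + cu) + 2 * opN Q * Lbar ^ (2 * i) * cx ^ 2) * X ^ 2 +
        (opN Q * ct * Lbar ^ i * cu + 2 * opN Q * Lbar ^ (2 * i) * cu ^ 2) * V ^ 2 := by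
    intro i hi
    have hi : i < N := mem_range.1 hi
    convert qf_sub_le_of_norm_sub_le Q hct (pow_nonneg hL i) hcu (hy i hi) (hdev i hi.le)
      using 3 <;> ring
  have hΦdev : ‖Φ (traj fe x v N) - Φ (traj fe y v N)‖ ≤
      (LΦ * Lbar ^ N) * (cx * X + cu * V) :=
    calc _ ≤ LΦ * ‖traj fe x v N - traj fe y v N‖ := hΦ _ _
      _ ≤ LΦ * (Lbar ^ N * (cx * X + cu * V)) := by gcongr; exact hdev N le_rfl
      _ = _ := by ring
  have hterminal : qf P (Φ (traj fe x v N)) - qf P (Φ (traj fe y v N)) ≤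
      (opN P * ct * LΦ * Lbar ^ N * (2 * cx + cu) +
          2 * opN P * LΦ ^ 2 * Lbar ^ (2 * N) * cx ^ 2) * X ^ 2 +
        (opN P * ct * LΦ * Lbar ^ N * cu + 2 * opN P * LΦ ^ 2 * Lbar ^ (2 * N) * cu ^ 2) * V ^ 2 := by
    convert qf_sub_le_of_norm_sub_le P hct (by positivity) hcu hΦy hΦdev using 3 <;> ring
  rw [JN_sub_JN, add_mul, add_mul, add_mul, add_mul, sum_mul, sum_mul]
  have := sum_le_sum hstage
  rw [sum_add_distrib] at this
  linarith

lemma subsingleton_of_norm_sub_le_mul_of_neg {α β : Type*} [NormedAddCommGroup α]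
    [SeminormedAddCommGroup β] {g : α → β} {L : ℝ} (hL : L < 0)
    (hg : ∀ x y, ‖g x - g y‖ ≤ L * ‖x - y‖) : Subsingleton α :=
  ⟨fun x y => by
    have hxy : ‖x - y‖ ≤ 0 := by nlinarith [hg x y, norm_nonneg (g x - g y), norm_nonneg (x - y)]
    exact sub_eq_zero.1 (norm_le_zero_iff.1 hxy)⟩

lemma eq_zero_of_JN_eq_VN_of_subsingleton {n m M : ℕ} [Subsingleton (E n)]
    (fe : E n → E m → E n) {S Xf : Set (E n)} {U : Set (E m)} {η Lbar c : ℝ}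
    {Q : Matrix (Fin n) (Fin n) ℝ} {R : Matrix (Fin m) (Fin m) ℝ} {P : Matrix (Fin M) (Fin M) ℝ}
    {Φ : E n → E M} {N : ℕ} (hU0 : 0 ∈ U) (hc : 0 ≤ c) (hXf : Xf = {x | qf P (Φ x) ≤ c})
    (hΦ0 : Φ 0 = 0) (hQ : Q.PosSemidef) (hR : R.PosDef) (hP : P.PosSemidef) (hN : 1 ≤ N)
    {x : E n} (hx : x ∈ S) {u : ℕ → E m}
    (hopt : JN fe Q R P Φ N x u = VN fe S Xf U η Lbar Q R P Φ N x) : u 0 = 0 := by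
  have hzero : ∀ y : E n, y = 0 := fun y => Subsingleton.elim y 0
  have hadm : Admissible fe S Xf U η Lbar N x (fun _ => 0) := by
    refine ⟨fun _ _ => hU0, fun k _ _ z _ => ?_, ?_⟩
    · rwa [Subsingleton.elim (_ + z) x]
    · rw [hXf, hzero (traj fe x _ N)]
      simpa [hΦ0, qf_zero] using hc
  have hcost : JN fe Q R P Φ N x (fun _ => 0) = 0 := by
    simp [JN, hzero (traj fe x _ _), hΦ0, qf_zero]
  by_contra hu
  have := VN_le_JN fe (Φ := Φ) hQ hR.posSemidef hP hadm
  linarith [qf_pos hR hu, qf_nonneg hQ x, stage_cost_le_JN fe (Φ := Φ) hQ hR.posSemidef hP hN x u]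

theorem optimal_value_function_decrease_general
    {n m M : ℕ} (S : Set (E n)) (U : Set (E m))
    (hU0 : (0 : E m) ∈ interior U)
    (f fe : E n → E m → E n)
    (cx cu η : ℝ) (hcu : 0 ≤ cu)
    (herr : ∀ x ∈ S, ∀ u ∈ U, ‖f x u - fe x u‖ ≤ min (cx * ‖x‖ + cu * ‖u‖) η)
    (Lbar : ℝ) (hL : 1 ≤ Lbar)
    (hLip : ∀ u ∈ U, ∀ x ∈ S, ∀ y ∈ S, ‖fe x u - fe y u‖ ≤ Lbar * ‖x - y‖)
    (Q : Matrix (Fin n) (Fin n) ℝ) (R : Matrix (Fin m) (Fin m) ℝ)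
    (hQ : Q.PosDef) (hR : R.PosDef)
    (P : Matrix (Fin M) (Fin M) ℝ) (hP : P.PosDef)
    (Φ : E n → E M) (LΦ : ℝ) (hΦ : ∀ x y, ‖Φ x - Φ y‖ ≤ LΦ * ‖x - y‖) (hΦ0 : Φ 0 = 0)
    (c : ℝ) (hc : 0 < c) (N : ℕ) (hN : 1 ≤ N)
    (Xf : Set (E n)) (hXf : Xf = {x | qf P (Φ x) ≤ c})
    (μ : E n → E m)
    (hμdec : ∀ x ∈ Xf,
      qf P (Φ (fe x (μ x))) - qf P (Φ x) ≤ -(qf Q x + qf R (μ x)))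
    (xh : E n) (hxh : xh ∈ S) (ustar : ℕ → E m)
    (hadm : Admissible fe S Xf U η Lbar N xh ustar)
    (hopt : JN fe Q R P Φ N xh ustar = VN fe S Xf U η Lbar Q R P Φ N xh)
    -- the shifted sequence is ε-admissible for the plant successor state
    (hadmplus : Admissible fe S Xf U η Lbar N (f xh (ustar 0))
      (fun k => if k + 1 < N then ustar (k + 1) else μ (traj fe xh ustar N)))
    -- all involved states lie in S
    (hstarS : ∀ i ≤ N, traj fe xh ustar i ∈ S)
    (hplusS : ∀ i < N, traj fe (f xh (ustar 0))
      (fun k => if k + 1 < N then ustar (k + 1) else μ (traj fe xh ustar N)) i ∈ S)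
    -- quadratic bounds on the optimal predicted states
    (ctilde : ℝ) (hctilde : 0 < ctilde)
    (hxbnd : ∀ i, 1 ≤ i → i ≤ N → ‖traj fe xh ustar i‖ ≤ ctilde * ‖xh‖)
    (hΦbnd : ‖Φ (fe (traj fe xh ustar N) (μ (traj fe xh ustar N)))‖ ≤ ctilde * ‖xh‖) :
    VN fe S Xf U η Lbar Q R P Φ N (f xh (ustar 0)) - VN fe S Xf U η Lbar Q R P Φ N xh ≤
      -(qf Q xh + qf R (ustar 0)) +
      ((∑ i ∈ Finset.range N,
          (opN Q * ctilde * Lbar ^ i * (2 * cx + cu) + 2 * opN Q * Lbar ^ (2 * i) * cx ^ 2)) +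
        opN P * ctilde * LΦ * Lbar ^ N * (2 * cx + cu) +
        2 * opN P * LΦ ^ 2 * Lbar ^ (2 * N) * cx ^ 2) * ‖xh‖ ^ 2 +
      ((∑ i ∈ Finset.range N,
          (opN Q * ctilde * Lbar ^ i * cu + 2 * opN Q * Lbar ^ (2 * i) * cu ^ 2)) +
        opN P * ctilde * LΦ * Lbar ^ N * cu +
        2 * opN P * LΦ ^ 2 * Lbar ^ (2 * N) * cu ^ 2) * ‖ustar 0‖ ^ 2 := by
  rcases lt_or_ge LΦ 0 with hLΦ | hLΦ
  · have := subsingleton_of_norm_sub_le_mul_of_neg hLΦ hΦ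
    have hu0 := eq_zero_of_JN_eq_VN_of_subsingleton fe (interior_subset hU0) hc.le hXf hΦ0
      hQ.posSemidef hR hP.posSemidef hN hxh hopt
    rw [Subsingleton.elim (f xh (ustar 0)) xh, hu0, Subsingleton.elim xh 0]
    simp [qf_zero]
  have hL0 : 0 ≤ Lbar := zero_le_one.trans hL
  set uplus := shiftInput ustar N (μ (traj fe xh ustar N))
  have hdev : ∀ i ≤ N, ‖traj fe (f xh (ustar 0)) uplus i - traj fe (fe xh (ustar 0)) uplus i‖ ≤
      Lbar ^ i * (cx * ‖xh‖ + cu * ‖ustar 0‖) := by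
    intro i hi
    refine (norm_traj_sub_le fe (v := uplus) hL0 hLip hadmplus.1 hplusS (fun j hj => ?_) i
      hi).trans ?_
    · rw [traj_shiftInput_of_lt fe _ hj]; exact hstarS _ hj
    · gcongr; exact (herr xh hxh _ (hadm.1 0 hN)).trans (min_le_left _ _)
  have hbound := JN_sub_JN_le fe Q R P hLΦ hΦ hL0 hctilde.le hcu hdev
    (fun i hi => by rw [traj_shiftInput_of_lt fe _ hi]; exact hxbnd _ (by omega) hi)
    (by rw [traj_shiftInput_self fe hN]; exact hΦbnd)
  have hshift : JN fe Q R P Φ N (fe xh (ustar 0)) uplus ≤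
      JN fe Q R P Φ N xh ustar - (qf Q xh + qf R (ustar 0)) :=
    JN_shiftInput_le fe hN xh ustar (hμdec _ hadm.2.2)
  have hV : VN fe S Xf U η Lbar Q R P Φ N (f xh (ustar 0)) ≤
      JN fe Q R P Φ N (f xh (ustar 0)) uplus :=
    VN_le_JN fe hQ.posSemidef hR.posSemidef hP.posSemidef hadmplus
  rw [← hopt]
  linarith

/-- Decrease of the optimal value function. -/
theorem optimal_value_function_decrease
    {n m M : ℕ} (S : Set (E n)) (U : Set (E m))
    (hScomp : IsCompact S) (hSconv : Convex ℝ S) (hS0 : (0 : E n) ∈ interior S)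
    (hUcomp : IsCompact U) (hUconv : Convex ℝ U) (hU0 : (0 : E m) ∈ interior U)
    (f fe : E n → E m → E n) (hf00 : f 0 0 = 0)
    (cx cu η : ℝ) (hcx : 0 ≤ cx) (hcu : 0 ≤ cu) (hη : 0 ≤ η)
    (herr : ∀ x ∈ S, ∀ u ∈ U, ‖f x u - fe x u‖ ≤ min (cx * ‖x‖ + cu * ‖u‖) η)
    (Lbar : ℝ) (hL : 1 ≤ Lbar)
    (hLip : ∀ u ∈ U, ∀ x ∈ S, ∀ y ∈ S, ‖fe x u - fe y u‖ ≤ Lbar * ‖x - y‖)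
    (Q : Matrix (Fin n) (Fin n) ℝ) (R : Matrix (Fin m) (Fin m) ℝ)
    (hQ : Q.PosDef) (hR : R.PosDef)
    (P : Matrix (Fin M) (Fin M) ℝ) (hP : P.PosDef)
    (Φ : E n → E M) (LΦ : ℝ) (hΦ : ∀ x y, ‖Φ x - Φ y‖ ≤ LΦ * ‖x - y‖) (hΦ0 : Φ 0 = 0)
    (c : ℝ) (hc : 0 < c) (N : ℕ) (hN : 1 ≤ N)
    (Xf : Set (E n)) (hXf : Xf = {x | qf P (Φ x) ≤ c})
    (hXfS : Xf ⊆ pDiff S (cbar Lbar N * η))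
    (μ : E n → E m) (hμ0 : μ 0 = 0) (hμU : ∀ x ∈ Xf, μ x ∈ U)
    (hμdec : ∀ x ∈ Xf,
      qf P (Φ (fe x (μ x))) - qf P (Φ x) ≤ -(qf Q x + qf R (μ x)))
    (xh : E n) (hxh : xh ∈ S) (ustar : ℕ → E m)
    (hadm : Admissible fe S Xf U η Lbar N xh ustar)
    (hopt : JN fe Q R P Φ N xh ustar = VN fe S Xf U η Lbar Q R P Φ N xh)
    -- the shifted sequence is ε-admissible for the plant successor state
    (hadmplus : Admissible fe S Xf U η Lbar N (f xh (ustar 0))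
      (fun k => if k + 1 < N then ustar (k + 1) else μ (traj fe xh ustar N)))
    -- all involved states lie in S
    (hstarS : ∀ i ≤ N, traj fe xh ustar i ∈ S)
    (hplusS : ∀ i < N, traj fe (f xh (ustar 0))
      (fun k => if k + 1 < N then ustar (k + 1) else μ (traj fe xh ustar N)) i ∈ S)
    -- quadratic bounds on the optimal predicted states
    (ctilde : ℝ) (hctilde : 0 < ctilde)
    (hxbnd : ∀ i, 1 ≤ i → i ≤ N → ‖traj fe xh ustar i‖ ≤ ctilde * ‖xh‖)
    (hΦbnd : ‖Φ (fe (traj fe xh ustar N) (μ (traj fe xh ustar N)))‖ ≤ ctilde * ‖xh‖) :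
    VN fe S Xf U η Lbar Q R P Φ N (f xh (ustar 0)) - VN fe S Xf U η Lbar Q R P Φ N xh ≤
      -(qf Q xh + qf R (ustar 0)) +
      ((∑ i ∈ Finset.range N,
          (opN Q * ctilde * Lbar ^ i * (2 * cx + cu) + 2 * opN Q * Lbar ^ (2 * i) * cx ^ 2)) +
        opN P * ctilde * LΦ * Lbar ^ N * (2 * cx + cu) +
        2 * opN P * LΦ ^ 2 * Lbar ^ (2 * N) * cx ^ 2) * ‖xh‖ ^ 2 +
      ((∑ i ∈ Finset.range N,
          (opN Q * ctilde * Lbar ^ i * cu + 2 * opN Q * Lbar ^ (2 * i) * cu ^ 2)) +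
        opN P * ctilde * LΦ * Lbar ^ N * cu +
        2 * opN P * LΦ ^ 2 * Lbar ^ (2 * N) * cu ^ 2) * ‖ustar 0‖ ^ 2 :=
  optimal_value_function_decrease_general S U hU0 f fe cx cu η hcu herr Lbar hL hLip Q R hQ hR P hP
    Φ LΦ hΦ hΦ0 c hc N hN Xf hXf μ hμdec xh hxh ustar hadm hopt hadmplus hstarS hplusS ctilde
    hctilde hxbnd hΦbnd
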